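/- The circle graph 𝒞 is not edge-transitive: there exist edges e and f of 𝒞 such that no automorphism of 𝒞 maps e to f. Specifically, no automorphism maps an edge consisting of two chords sharing an endpoint on S¹ to an edge consisting of two chords that intersect only at an interior point of the unit disc. -/

import Mathlib

noncomputable section

/-- The unit circle in the complex plane. -/
def S1 : Set ℂ := {z : ℂ | ‖z‖ = 1}

/-- The closed segment in the plane spanned by an unordered pair of points. -/
def chordSegment : Sym2 ℂ → Set ℂ :=
  Sym2.lift ⟨fun a b => segment ℝ a b, fun a b => segment_symm ℝ a b⟩

/-- A chord of the circle: an unordered pair of two distinct points of `S1`. -/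
def Chord : Type := {p : Sym2 ℂ // (∀ z ∈ p, z ∈ S1) ∧ ¬ p.IsDiag}

/-- The circle graph: vertices are the chords of the circle, two distinct chords being
adjacent whenever their segments intersect. -/
def CircleGraph : SimpleGraph Chord where
  Adj C D := C ≠ D ∧ (chordSegment C.1 ∩ chordSegment D.1).Nonempty
  symm := ⟨fun C D ⟨h1, h2⟩ => ⟨h1.symm, by rwa [Set.inter_comm]⟩⟩
  loopless := ⟨fun C h => h.1 rfl⟩

/-- Two chords are *incident* if they share an endpoint on the circle. -/
def Incident (C D : Chord) : Prop := ∃ z : ℂ, z ∈ C.1 ∧ z ∈ D.1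

/-!
Call a vertex *far* from an edge `{C, D}` if it is neither equal nor adjacent to `C` or `D`.
Having four far vertices, pairwise non-adjacent, no two of which have a common far neighbour,
is a property of the edge that automorphisms preserve.

Two chords crossing inside the disc cut it into four open quadrants. A far chord misses both
chords, so it lies in a single quadrant and meets only chords of that quadrant: one chord in
each quadrant gives such a quadruple. Two chords `za`, `zb` sharing the endpoint `z` leave only
three regions meeting the circle, since every chord from `z` points into the half-plane
`⟪z, ·⟫ < 0` and so the angle opposite to `azb` misses the circle. Among four far chords two
therefore lie in one region, which is convex, and the chord joining them is a common far
neighbour.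
-/

attribute [local instance] Complex.finrank_real_complex_fact

local notation "ω" => Complex.orientation.areaForm

open Finset Metric

namespace SimpleGraph

variable {V W ι : Type*} {G : SimpleGraph V} {H : SimpleGraph W}

variable (G) in
def farFrom (C D : V) : Set V := {F | F ≠ C ∧ ¬G.Adj F C ∧ F ≠ D ∧ ¬G.Adj F D}

variable (G) in
def HasFourSeparatedFarVertices (C D : V) : Prop :=
  ∃ S : Finset V, 4 ≤ #S ∧ ↑S ⊆ G.farFrom C D ∧ (S : Set V).Pairwise fun E E' =>
    ¬G.Adj E E' ∧ ∀ F ∈ G.farFrom C D, ¬(G.Adj F E ∧ G.Adj F E')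

lemma Iso.apply_mem_farFrom_iff (e : G ≃g H) {C D F : V} :
    e F ∈ H.farFrom (e C) (e D) ↔ F ∈ G.farFrom C D := by
  simp [farFrom, e.map_adj_iff]

lemma HasFourSeparatedFarVertices.map (e : G ≃g H) {C D : V}
    (h : G.HasFourSeparatedFarVertices C D) : H.HasFourSeparatedFarVertices (e C) (e D) := by
  obtain ⟨S, hcard, hfar, hsep⟩ := h
  have hfar' : ∀ F, F ∈ H.farFrom (e C) (e D) ↔ e.symm F ∈ G.farFrom C D := fun F => by
    rw [← e.apply_mem_farFrom_iff, e.apply_symm_apply]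
  refine ⟨S.map e.toEquiv.toEmbedding, by simpa using hcard, ?_, ?_⟩
  · simpa [Set.subset_def, e.apply_mem_farFrom_iff] using hfar
  · refine (coe_map _ S ▸ e.injective.injOn.pairwise_image).2 <| hsep.imp fun E E' ⟨hadj, hF⟩ =>
      ⟨by simpa [e.map_adj_iff] using hadj, fun F hF' => ?_⟩
    simpa [← e.symm.map_adj_iff] using hF _ ((hfar' F).1 hF')

lemma hasFourSeparatedFarVertices_of_label {C D : V} (q : V → ι)
    (hq : ∀ F ∈ G.farFrom C D, ∀ F' ∈ G.farFrom C D, G.Adj F F' → q F = q F')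
    (s : Finset ι) (hs : 4 ≤ #s) (E : ι → V) (hE : ∀ i ∈ s, E i ∈ G.farFrom C D ∧ q (E i) = i) :
    G.HasFourSeparatedFarVertices C D := by
  classical
  have hinj : Set.InjOn E s := fun i hi j hj hij => by
    rw [← (hE i hi).2, ← (hE j hj).2, hij]
  refine ⟨s.image E, by rwa [card_image_of_injOn hinj], ?_, ?_⟩
  · simpa [Set.subset_def] using fun i hi => (hE i hi).1
  · rw [coe_image, hinj.pairwise_image]
    intro i hi j hj hij
    refine ⟨fun hadj => hij ?_, fun F hF ⟨hFi, hFj⟩ => hij ?_⟩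
    · rw [← (hE i hi).2, ← (hE j hj).2, hq _ (hE i hi).1 _ (hE j hj).1 hadj]
    · rw [← (hE i hi).2, ← (hE j hj).2, ← hq _ hF _ (hE i hi).1 hFi, hq _ hF _ (hE j hj).1 hFj]

lemma not_hasFourSeparatedFarVertices_of_label {C D : V} (q : V → ι) (t : Finset ι)
    (ht : #t ≤ 3) (hq : ∀ F ∈ G.farFrom C D, q F ∈ t)
    (hjoin : ∀ E ∈ G.farFrom C D, ∀ E' ∈ G.farFrom C D, E ≠ E' → ¬G.Adj E E' → q E = q E' →
      ∃ F ∈ G.farFrom C D, G.Adj F E ∧ G.Adj F E') :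
    ¬G.HasFourSeparatedFarVertices C D := by
  rintro ⟨S, hS, hfar, hsep⟩
  obtain ⟨E, hE, E', hE', hne, hqE⟩ :=
    exists_ne_map_eq_of_card_lt_of_maps_to (by omega) fun F hF => hq F (hfar hF)
  obtain ⟨hadj, hF⟩ := hsep hE hE' hne
  obtain ⟨F, hFfar, hFE⟩ := hjoin E (hfar hE) E' (hfar hE') hne hadj hqE
  exact hF F hFfar hFE

end SimpleGraph

lemma IsPreconnected.mul_pos_of_ne_zero {X : Type*} [TopologicalSpace X] {s : Set X}
    (hs : IsPreconnected s) {f : X → ℝ} (hf : ContinuousOn f s) (h0 : ∀ y ∈ s, f y ≠ 0)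
    {x y : X} (hx : x ∈ s) (hy : y ∈ s) : 0 < f x * f y := by
  by_contra! h
  have h0' : (0 : ℝ) ∈ Set.Icc (f x) (f y) ∪ Set.Icc (f y) (f x) := by
    rcases (h0 x hx).lt_or_gt with hfx | hfx
    · exact Or.inl ⟨hfx.le, by nlinarith⟩
    · exact Or.inr ⟨by nlinarith, hfx.le⟩
  obtain ⟨w, hw, hw0⟩ : (0 : ℝ) ∈ f '' s := by
    rcases h0' with h' | h'
    exacts [hs.intermediate_value hx hy hf h', hs.intermediate_value hy hx hf h']
  exact h0 w hw hw0

lemma sign_eq_sign_iff_mul_pos {x y : ℝ} (hx : x ≠ 0) :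
    SignType.sign x = SignType.sign y ↔ 0 < x * y := by
  rcases hx.lt_or_gt with hx | hx <;> rcases lt_trichotomy y 0 with hy | hy | hy <;>
    simp [sign_neg, sign_pos, hx, hy, mul_pos_iff, hx.le, hy.le]

lemma sign_eq_of_pos_mul {s : SignType} {x : ℝ} (h : 0 < (s : ℝ) * x) : SignType.sign x = s := by
  cases s <;> simp at h <;> simp [sign_neg, sign_pos, h]

lemma sign_mem_one_neg_one {x : ℝ} (hx : x ≠ 0) :
    SignType.sign x ∈ ({1, -1} : Finset SignType) := by
  rcases hx.lt_or_gt with hx | hx <;> simp [sign_neg, sign_pos, hx]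

lemma eq_or_eq_of_mem_segment_of_norm_eq {E : Type*} [NormedAddCommGroup E] [NormedSpace ℝ E]
    [StrictConvexSpace ℝ E] {a c y : E} {r : ℝ} (ha : ‖a‖ = r) (hc : ‖c‖ = r) (hy : ‖y‖ = r)
    (h : y ∈ segment ℝ a c) : y = a ∨ y = c := by
  by_contra! hne
  have := (Sbtw.dist_lt_max_dist (0 : E) ⟨mem_segment_iff_wbtw.1 h, hne.1, hne.2⟩)
  simp only [dist_zero_right, ha, hc, hy, max_self, lt_self_iff_false] at this

lemma exists_pos_norm_add_smul_eq {E : Type*} [NormedAddCommGroup E] [NormedSpace ℝ E]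
    {p e : E} {r : ℝ} (hp : ‖p‖ < r) (he : e ≠ 0) : ∃ t : ℝ, 0 < t ∧ ‖p + t • e‖ = r := by
  have he' : 0 < ‖e‖ := norm_pos_iff.2 he
  set T := (r + ‖p‖) / ‖e‖
  have hT : 0 ≤ T := div_nonneg (by linarith [norm_nonneg p]) he'.le
  have hrT : r ≤ ‖p + T • e‖ := by
    have hTe : ‖T • e‖ = r + ‖p‖ := by
      rw [norm_smul, Real.norm_of_nonneg hT, div_mul_cancel₀ _ he'.ne']
    have := norm_sub_le (p + T • e) p
    rw [add_sub_cancel_left] at this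
    linarith
  obtain ⟨t, ht, hteq⟩ := intermediate_value_Icc hT
    (by fun_prop : Continuous fun t : ℝ => ‖p + t • e‖).continuousOn ⟨by simpa using hp.le, hrT⟩
  refine ⟨t, lt_of_le_of_ne ht.1 ?_, hteq⟩
  rintro rfl
  simp only [zero_smul, add_zero] at hteq
  exact hp.ne hteq

namespace Complex

lemma areaForm_apply_eq (u v : ℂ) : ω u v = u.re * v.im - u.im * v.re := by
  simp; ring

lemma areaForm_smul_eq_add (u v x : ℂ) : ω u v • x = ω x v • u + ω u x • v := by
  apply Complex.ext <;> simp <;> ring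

lemma exists_eq_smul_of_areaForm_eq_zero {u v : ℂ} (hu : u ≠ 0) (h : ω u v = 0) :
    ∃ t : ℝ, v = t • u := by
  have hN : u.re ^ 2 + u.im ^ 2 ≠ 0 := by
    simpa [normSq_apply, sq] using normSq_eq_zero.not.2 hu
  rw [areaForm_apply_eq] at h
  refine ⟨(u.re * v.re + u.im * v.im) / (u.re ^ 2 + u.im ^ 2), Complex.ext ?_ ?_⟩ <;>
    simp only [real_smul, re_ofReal_mul, im_ofReal_mul] <;> field_simp
  · linear_combination (-u.im) * h
  · linear_combination u.re * h

lemma convex_setOf_areaForm_sub_pos (u z : ℂ) : Convex ℝ {y | 0 < ω u (y - z)} := by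
  simpa only [map_sub, sub_pos] using convex_halfSpace_gt (ω u).isLinear (ω u z)

lemma areaForm_sub_eq_zero_of_mem_segment {a c y : ℂ} (hy : y ∈ segment ℝ a c) :
    ω (c - a) (y - a) = 0 := by
  rw [segment_eq_image'] at hy
  obtain ⟨t, -, rfl⟩ := hy
  simp only [add_sub_cancel_left, map_smul, Orientation.areaForm_apply_self, smul_zero]

lemma disjoint_segment_of_areaForm_mul_pos {a c x x' : ℂ}
    (h : 0 < ω (c - a) (x - a) * ω (c - a) (x' - a)) :
    Disjoint (segment ℝ x x') (segment ℝ a c) := by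
  set k := ω (c - a) (x - a)
  have hk : k ≠ 0 := by rintro hk; simp [hk] at h
  have hsub : segment ℝ x x' ⊆ {y | 0 < ω (k • (c - a)) (y - a)} :=
    (convex_setOf_areaForm_sub_pos _ a).segment_subset
      (by simpa only [Set.mem_ofPred_eq, LinearMap.map_smul₂, smul_eq_mul] using mul_self_pos.2 hk)
      (by simpa only [Set.mem_ofPred_eq, LinearMap.map_smul₂, smul_eq_mul] using h)
  refine Set.disjoint_left.2 fun y hy hyac => ?_
  simpa only [Set.mem_ofPred_eq, LinearMap.map_smul₂, smul_eq_mul,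
    areaForm_sub_eq_zero_of_mem_segment hyac, mul_zero, lt_self_iff_false] using hsub hy

lemma mem_segment_of_areaForm_eq_zero {a c y : ℂ} (ha : ‖a‖ = 1) (hc : ‖c‖ = 1) (hac : a ≠ c)
    (hy : ‖y‖ ≤ 1) (h : ω (c - a) (y - a) = 0) : y ∈ segment ℝ a c := by
  obtain ⟨t, ht⟩ := exists_eq_smul_of_areaForm_eq_zero (sub_ne_zero.2 hac.symm) h
  have hcol : Collinear ℝ {a, y, c} := by
    rw [collinear_iff_of_mem (p₀ := a) (by simp)]
    refine ⟨c - a, ?_⟩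
    simp only [Set.mem_insert_iff, Set.mem_singleton_iff, forall_eq_or_imp, forall_eq]
    exact ⟨⟨0, by simp⟩, ⟨t, by rw [← ht]; simp⟩, ⟨1, by simp⟩⟩
  exact mem_segment_iff_wbtw.2 <| hcol.wbtw_of_dist_eq_of_dist_le (p := 0)
    (by simpa using ha) (by simpa using hy) (by simpa using hc) hac

/-- No point `w` of the circle lies in the angle vertically opposite to `azb`. -/
lemma not_areaForm_mul_neg_and_areaForm_mul_neg {z a b w : ℂ} (hz : ‖z‖ = 1) (ha : ‖a‖ = 1)
    (hb : ‖b‖ = 1) (hw : ‖w‖ = 1) :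
    ¬(ω (a - z) (w - z) * ω (a - z) (b - z) < 0 ∧ ω (b - z) (w - z) * ω (b - z) (a - z) < 0) := by
  rintro ⟨h1, h2⟩
  have hdot := congrArg (inner ℝ z) (areaForm_smul_eq_add (a - z) (b - z) (w - z))
  simp only [inner_add_right, real_inner_smul_right] at hdot
  have hinner : ∀ y : ℂ, ‖y‖ = 1 → inner ℝ z (y - z) ≤ 0 := fun y hy => by
    have := real_inner_le_norm z y
    rw [inner_sub_right, real_inner_self_eq_norm_sq]
    nlinarith
  have hu : inner ℝ z (a - z) < 0 := by
    have haz : a ≠ z := by rintro rfl; simp at h1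
    have h3 := norm_sub_sq_real a z
    have h4 : 0 < ‖a - z‖ := norm_pos_iff.2 (sub_ne_zero.2 haz)
    rw [inner_sub_right, real_inner_self_eq_norm_sq, real_inner_comm]
    nlinarith
  rw [Orientation.areaForm_swap _ (b - z) (w - z), Orientation.areaForm_swap _ (b - z) (a - z),
    neg_mul_neg] at h2
  have key := congrArg (· * ω (a - z) (b - z)) hdot
  nlinarith [mul_pos_of_neg_of_neg h2 hu, mul_nonneg_of_nonpos_of_nonpos h1.le (hinner b hb),
    mul_nonpos_of_nonneg_of_nonpos (mul_self_nonneg (ω (a - z) (b - z))) (hinner w hw)]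

end Complex

namespace Chord

open Complex

variable {C D F : Chord} {a c b d y : ℂ}

def mk (a c : ℂ) (ha : ‖a‖ = 1) (hc : ‖c‖ = 1) (hac : a ≠ c) : Chord :=
  ⟨s(a, c), by simp [S1, ha, hc], by simpa using hac⟩

lemma exists_val_eq (C : Chord) : ∃ a c, C.1 = s(a, c) :=
  let ⟨⟨a, c⟩, h⟩ := Quot.exists_rep C.1
  ⟨a, c, h.symm⟩

lemma norm_eq_one_and_ne_of_val_eq (hC : C.1 = s(a, c)) : ‖a‖ = 1 ∧ ‖c‖ = 1 ∧ a ≠ c :=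
  ⟨C.2.1 a (hC ▸ Sym2.mem_mk_left a c), C.2.1 c (hC ▸ Sym2.mem_mk_right a c),
    fun h => C.2.2 (by rw [hC, h]; exact Sym2.mk_isDiag_iff.2 rfl)⟩

lemma convex_chordSegment (C : Chord) : Convex ℝ (chordSegment C.1) := by
  obtain ⟨a, c, hC⟩ := C.exists_val_eq
  rw [hC]
  exact convex_segment a c

lemma chordSegment_subset_closedBall (C : Chord) : chordSegment C.1 ⊆ closedBall 0 1 := by
  obtain ⟨a, c, hC⟩ := C.exists_val_eq
  obtain ⟨ha, hc, -⟩ := norm_eq_one_and_ne_of_val_eq hC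
  rw [hC]
  exact (convex_closedBall 0 1).segment_subset (by simp [ha]) (by simp [hc])

lemma mem_chordSegment_of_mem {z : ℂ} (hz : z ∈ C.1) : z ∈ chordSegment C.1 := by
  obtain ⟨a, hC⟩ := Sym2.mem_iff_exists.1 hz
  rw [hC]
  exact left_mem_segment ℝ z a

lemma mem_of_mem_chordSegment (hy : y ∈ chordSegment C.1) (h : ‖y‖ = 1) : y ∈ C.1 := by
  obtain ⟨a, c, hC⟩ := C.exists_val_eq
  obtain ⟨ha, hc, -⟩ := norm_eq_one_and_ne_of_val_eq hC
  rw [hC] at hy ⊢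
  rcases eq_or_eq_of_mem_segment_of_norm_eq ha hc h hy with rfl | rfl <;> simp

lemma disjoint_chordSegment_iff :
    Disjoint (chordSegment C.1) (chordSegment D.1) ↔ C ≠ D ∧ ¬CircleGraph.Adj C D := by
  refine ⟨fun h => ⟨?_, fun hCD => Set.not_disjoint_iff_nonempty_inter.2 hCD.2 h⟩,
    fun ⟨hne, hadj⟩ => by_contra fun h => hadj ⟨hne, Set.not_disjoint_iff_nonempty_inter.1 h⟩⟩
  rintro rfl
  exact Set.disjoint_left.1 h (mem_chordSegment_of_mem (Sym2.out_fst_mem C.1))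
    (mem_chordSegment_of_mem (Sym2.out_fst_mem C.1))

lemma adj_of_mem_of_not_mem {y y' : ℂ} (hyC : y ∈ chordSegment C.1) (hyD : y ∈ chordSegment D.1)
    (hy'C : y' ∈ chordSegment C.1) (hy'D : y' ∉ chordSegment D.1) : CircleGraph.Adj C D :=
  ⟨by rintro rfl; exact hy'D hy'C, y, hyC, hyD⟩

lemma mem_farFrom_iff : F ∈ CircleGraph.farFrom C D ↔
    Disjoint (chordSegment F.1) (chordSegment C.1) ∧
      Disjoint (chordSegment F.1) (chordSegment D.1) := by
  simp only [SimpleGraph.farFrom, Set.mem_ofPred_eq, disjoint_chordSegment_iff]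
  tauto

lemma norm_lt_one_of_not_incident {p : ℂ} (hpC : p ∈ chordSegment C.1) (hpD : p ∈ chordSegment D.1)
    (h : ¬Incident C D) : ‖p‖ < 1 :=
  lt_of_le_of_ne (by simpa using C.chordSegment_subset_closedBall hpC) fun h1 =>
    h ⟨p, mem_of_mem_chordSegment hpC h1, mem_of_mem_chordSegment hpD h1⟩

lemma areaForm_ne_zero_of_not_incident {p : ℂ} (hC : C.1 = s(a, c)) (hD : D.1 = s(b, d))
    (hpC : p ∈ segment ℝ a c) (hpD : p ∈ segment ℝ b d) (h : ¬Incident C D) :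
    ω (c - a) (d - b) ≠ 0 := by
  intro h0
  obtain ⟨ha, hc, hac⟩ := norm_eq_one_and_ne_of_val_eq hC
  obtain ⟨hb, -, hbd⟩ := norm_eq_one_and_ne_of_val_eq hD
  obtain ⟨t, ht⟩ := exists_eq_smul_of_areaForm_eq_zero (sub_ne_zero.2 hbd.symm)
    (areaForm_sub_eq_zero_of_mem_segment hpD)
  have hb' : ω (c - a) (b - a) = 0 := by
    rw [show b - a = (p - a) - t • (d - b) by rw [← ht]; abel, map_sub, map_smul, h0,
      areaForm_sub_eq_zero_of_mem_segment hpC, smul_zero, sub_zero]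
  have hbC : b ∈ chordSegment C.1 := by
    rw [hC]; exact mem_segment_of_areaForm_eq_zero ha hc hac hb.le hb'
  exact h ⟨b, mem_of_mem_chordSegment hbC hb, hD ▸ Sym2.mem_mk_left b d⟩

lemma areaForm_ne_zero_of_disjoint (hC : C.1 = s(a, c))
    (h : Disjoint (chordSegment F.1) (chordSegment C.1)) (hy : y ∈ chordSegment F.1) :
    ω (c - a) (y - a) ≠ 0 := fun h0 => by
  obtain ⟨ha, hc, hac⟩ := norm_eq_one_and_ne_of_val_eq hC
  have hyC := mem_segment_of_areaForm_eq_zero ha hc hac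
    (by simpa using F.chordSegment_subset_closedBall hy) h0
  exact Set.disjoint_left.1 h hy (by rwa [hC])

lemma sign_areaForm_eq_of_disjoint (hC : C.1 = s(a, c))
    (h : Disjoint (chordSegment F.1) (chordSegment C.1)) {y' : ℂ} (hy : y ∈ chordSegment F.1)
    (hy' : y' ∈ chordSegment F.1) :
    SignType.sign (ω (c - a) (y - a)) = SignType.sign (ω (c - a) (y' - a)) :=
  (sign_eq_sign_iff_mul_pos (areaForm_ne_zero_of_disjoint hC h hy)).2 <|
    F.convex_chordSegment.isPreconnected.mul_pos_of_ne_zero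
      ((LinearMap.continuous_of_finiteDimensional (ω (c - a))).comp
        (continuous_sub_right a)).continuousOn
      (fun _ hx => areaForm_ne_zero_of_disjoint hC h hx) hy hy'

lemma exists_chordSegment_subset_setOf_areaForm_pos {p u w : ℂ} (hp : ‖p‖ < 1)
    (hpa : ω u (p - a) = 0) (hpb : ω w (p - b) = 0) (huw : ω u w ≠ 0) :
    ∃ E : Chord, chordSegment E.1 ⊆ {y | 0 < ω u (y - a)} ∩ {y | 0 < ω w (y - b)} := by
  set k := ω u w
  have hwu : ω w u = -k := Orientation.areaForm_swap _ w u
  -- the rays from `p` in the directions `k • (s • w - u)`, `s = 1, 2`, run inside the quadrant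
  have ray : ∀ s : ℝ, ∃ x : ℂ, ‖x‖ = 1 ∧ ∃ t > 0,
      ω u (x - a) = t * (s * (k * k)) ∧ ω w (x - b) = t * (k * k) := by
    intro s
    have hval : ∀ t : ℝ, ω u (p + t • k • (s • w - u) - a) = t * (s * (k * k)) ∧
        ω w (p + t • k • (s • w - u) - b) = t * (k * k) := fun t => by
      simp only [add_sub_right_comm p, map_add, map_smul, map_sub, hpa, hpb, hwu,
        Orientation.areaForm_apply_self, smul_eq_mul]
      constructor <;> ring
    have he : k • (s • w - u) ≠ 0 := fun h0 => by
      have := (hval 1).2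
      rw [h0, smul_zero, add_zero, hpb] at this
      exact mul_self_ne_zero.2 huw (by linarith)
    obtain ⟨t, ht, hx⟩ := exists_pos_norm_add_smul_eq hp he
    exact ⟨_, hx, t, ht, hval t⟩
  obtain ⟨x, hx, t, ht, hxa, hxb⟩ := ray 1
  obtain ⟨x', hx', t', ht', hxa', hxb'⟩ := ray 2
  have hk : 0 < k * k := mul_self_pos.2 huw
  have hne : x ≠ x' := by
    rintro rfl
    nlinarith
  refine ⟨mk x x' hx hx' hne, ((convex_setOf_areaForm_sub_pos u a).inter
    (convex_setOf_areaForm_sub_pos w b)).segment_subset ?_ ?_⟩ <;>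
    simp only [Set.mem_inter_iff, Set.mem_ofPred_eq, hxa, hxb, hxa', hxb'] <;>
    constructor <;> positivity

end Chord

namespace CircleGraph

open Complex Chord SimpleGraph

variable {C D : Chord}

/-- The sides of the lines `ac` and `bd` on which `F` lies, read off at an endpoint of `F`. -/
def sidePattern (a c b d : ℂ) (F : Chord) : SignType × SignType :=
  (SignType.sign (ω (c - a) (F.1.out.1 - a)), SignType.sign (ω (d - b) (F.1.out.1 - b)))

lemma sidePattern_eq {a c b d : ℂ} (hC : C.1 = s(a, c)) (hD : D.1 = s(b, d)) {F : Chord}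
    (hF : F ∈ CircleGraph.farFrom C D) {y : ℂ} (hy : y ∈ chordSegment F.1) :
    sidePattern a c b d F =
      (SignType.sign (ω (c - a) (y - a)), SignType.sign (ω (d - b) (y - b))) := by
  have hx := mem_chordSegment_of_mem (Sym2.out_fst_mem F.1)
  rw [mem_farFrom_iff] at hF
  rw [sidePattern, sign_areaForm_eq_of_disjoint hC hF.1 hx hy,
    sign_areaForm_eq_of_disjoint hD hF.2 hx hy]

lemma exists_mem_farFrom_sidePattern_eq {a c b d p : ℂ} (hC : C.1 = s(a, c))
    (hD : D.1 = s(b, d)) (hpC : p ∈ segment ℝ a c) (hpD : p ∈ segment ℝ b d) (hp : ‖p‖ < 1)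
    (hk : ω (c - a) (d - b) ≠ 0) {s : SignType × SignType} (hs₁ : (s.1 : ℝ) ≠ 0)
    (hs₂ : (s.2 : ℝ) ≠ 0) :
    ∃ E ∈ CircleGraph.farFrom C D, sidePattern a c b d E = s := by
  obtain ⟨E, hE⟩ := exists_chordSegment_subset_setOf_areaForm_pos hp
    (u := (s.1 : ℝ) • (c - a)) (w := (s.2 : ℝ) • (d - b))
    (by rw [LinearMap.map_smul₂, areaForm_sub_eq_zero_of_mem_segment hpC, smul_zero])
    (by rw [LinearMap.map_smul₂, areaForm_sub_eq_zero_of_mem_segment hpD, smul_zero])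
    (by rw [LinearMap.map_smul₂, map_smul, smul_eq_mul, smul_eq_mul]
        exact mul_ne_zero hs₁ (mul_ne_zero hs₂ hk))
  have hpos : ∀ y ∈ chordSegment E.1,
      0 < (s.1 : ℝ) * ω (c - a) (y - a) ∧ 0 < (s.2 : ℝ) * ω (d - b) (y - b) := fun y hy => by
    simpa only [Set.mem_inter_iff, Set.mem_ofPred_eq, LinearMap.map_smul₂, smul_eq_mul] using hE hy
  have hfar : E ∈ CircleGraph.farFrom C D := by
    refine mem_farFrom_iff.2 ⟨Set.disjoint_left.2 fun y hy hyC => ?_,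
      Set.disjoint_left.2 fun y hy hyD => ?_⟩
    · rw [hC] at hyC
      simpa only [areaForm_sub_eq_zero_of_mem_segment hyC, mul_zero, lt_self_iff_false]
        using (hpos y hy).1
    · rw [hD] at hyD
      simpa only [areaForm_sub_eq_zero_of_mem_segment hyD, mul_zero, lt_self_iff_false]
        using (hpos y hy).2
  have hx := mem_chordSegment_of_mem (Sym2.out_fst_mem E.1)
  refine ⟨E, hfar, ?_⟩
  rw [sidePattern_eq hC hD hfar hx, sign_eq_of_pos_mul (hpos _ hx).1,
    sign_eq_of_pos_mul (hpos _ hx).2]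

theorem hasFourSeparatedFarVertices_of_not_incident (hCD : CircleGraph.Adj C D)
    (h : ¬Incident C D) : CircleGraph.HasFourSeparatedFarVertices C D := by
  obtain ⟨a, c, hC⟩ := C.exists_val_eq
  obtain ⟨b, d, hD⟩ := D.exists_val_eq
  obtain ⟨p, hpC, hpD⟩ := hCD.2
  have hp := norm_lt_one_of_not_incident hpC hpD h
  rw [hC] at hpC
  rw [hD] at hpD
  have hk := areaForm_ne_zero_of_not_incident hC hD hpC hpD h
  have hquad : ∀ s ∈ ({1, -1} ×ˢ {1, -1} : Finset (SignType × SignType)),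
      ∃ E ∈ CircleGraph.farFrom C D, sidePattern a c b d E = s := fun s hs => by
    simp only [mem_product, mem_insert, mem_singleton] at hs
    exact exists_mem_farFrom_sidePattern_eq hC hD hpC hpD hp hk
      (by rcases hs.1 with h | h <;> simp [h]) (by rcases hs.2 with h | h <;> simp [h])
  have : Nonempty Chord := ⟨C⟩
  choose! E hE using hquad
  refine hasFourSeparatedFarVertices_of_label (sidePattern a c b d) ?_ _ (by decide) E hE
  rintro F hF F' hF' ⟨-, y, hyF, hyF'⟩
  rw [sidePattern_eq hC hD hF hyF, sidePattern_eq hC hD hF' hyF']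

lemma exists_mem_farFrom_adj_adj_of_sidePattern_eq {a c b d : ℂ} (hC : C.1 = s(a, c))
    (hD : D.1 = s(b, d)) {E E' : Chord} (hE : E ∈ CircleGraph.farFrom C D) (hne : E ≠ E')
    (hadj : ¬CircleGraph.Adj E E')
    (hq : sidePattern a c b d E = sidePattern a c b d E') :
    ∃ F ∈ CircleGraph.farFrom C D, CircleGraph.Adj F E ∧ CircleGraph.Adj F E' := by
  have hx := mem_chordSegment_of_mem (Sym2.out_fst_mem E.1)
  have hx' := mem_chordSegment_of_mem (Sym2.out_fst_mem E'.1)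
  have hEE' := disjoint_chordSegment_iff.2 ⟨hne, hadj⟩
  have hxx' : E.1.out.1 ≠ E'.1.out.1 := fun h => Set.disjoint_left.1 hEE' hx (h ▸ hx')
  rw [sidePattern, sidePattern, Prod.mk.injEq] at hq
  have hposC := (sign_eq_sign_iff_mul_pos
    (areaForm_ne_zero_of_disjoint hC (mem_farFrom_iff.1 hE).1 hx)).1 hq.1
  have hposD := (sign_eq_sign_iff_mul_pos
    (areaForm_ne_zero_of_disjoint hD (mem_farFrom_iff.1 hE).2 hx)).1 hq.2
  let F := mk _ _ (E.2.1 _ (Sym2.out_fst_mem _)) (E'.2.1 _ (Sym2.out_fst_mem _)) hxx'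
  have hxF : E.1.out.1 ∈ chordSegment F.1 := left_mem_segment ℝ _ _
  have hx'F : E'.1.out.1 ∈ chordSegment F.1 := right_mem_segment ℝ _ _
  refine ⟨F, mem_farFrom_iff.2 ⟨?_, ?_⟩,
    adj_of_mem_of_not_mem hxF hx hx'F fun h => Set.disjoint_left.1 hEE' h hx',
    adj_of_mem_of_not_mem hx'F hx' hxF fun h => Set.disjoint_left.1 hEE' hx h⟩
  · rw [hC]; exact disjoint_segment_of_areaForm_mul_pos hposC
  · rw [hD]; exact disjoint_segment_of_areaForm_mul_pos hposD

theorem not_hasFourSeparatedFarVertices_of_incident (hCD : CircleGraph.Adj C D)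
    (h : Incident C D) : ¬CircleGraph.HasFourSeparatedFarVertices C D := by
  obtain ⟨z, hzC, hzD⟩ := h
  obtain ⟨a, hC⟩ := Sym2.mem_iff_exists.1 hzC
  obtain ⟨b, hD⟩ := Sym2.mem_iff_exists.1 hzD
  obtain ⟨hz, ha, hza⟩ := norm_eq_one_and_ne_of_val_eq hC
  obtain ⟨-, hb, hzb⟩ := norm_eq_one_and_ne_of_val_eq hD
  have hab : a ≠ b := by
    rintro rfl
    exact hCD.1 (Subtype.ext (hC.trans hD.symm))
  have hbC : ω (a - z) (b - z) ≠ 0 := fun h0 => by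
    rcases eq_or_eq_of_mem_segment_of_norm_eq hz ha hb
      (mem_segment_of_areaForm_eq_zero hz ha hza hb.le h0) with h | h
    exacts [hzb h.symm, hab h.symm]
  have haD : ω (b - z) (a - z) ≠ 0 := by
    rwa [Orientation.areaForm_swap, neg_ne_zero]
  refine not_hasFourSeparatedFarVertices_of_label (sidePattern z a z b)
    (({1, -1} ×ˢ {1, -1} : Finset (SignType × SignType)).erase
      (SignType.sign (-ω (a - z) (b - z)), SignType.sign (-ω (b - z) (a - z)))) ?_ ?_
    fun E hE E' _ => exists_mem_farFrom_adj_adj_of_sidePattern_eq hC hD hE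
  · rw [card_erase_of_mem (mem_product.2 ⟨sign_mem_one_neg_one (neg_ne_zero.2 hbC),
      sign_mem_one_neg_one (neg_ne_zero.2 haD)⟩)]
    rfl
  · intro F hF
    have hx := mem_chordSegment_of_mem (Sym2.out_fst_mem F.1)
    have h1 := areaForm_ne_zero_of_disjoint hC (mem_farFrom_iff.1 hF).1 hx
    have h2 := areaForm_ne_zero_of_disjoint hD (mem_farFrom_iff.1 hF).2 hx
    refine mem_erase.2
      ⟨fun heq => ?_, mem_product.2 ⟨sign_mem_one_neg_one h1, sign_mem_one_neg_one h2⟩⟩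
    rw [sidePattern, Prod.mk.injEq, sign_eq_sign_iff_mul_pos h1, sign_eq_sign_iff_mul_pos h2,
      mul_neg, mul_neg, neg_pos, neg_pos] at heq
    exact not_areaForm_mul_neg_and_areaForm_mul_neg hz ha hb (F.2.1 _ (Sym2.out_fst_mem F.1)) heq

end CircleGraph

lemma Incident.symm {C D : Chord} (h : Incident C D) : Incident D C :=
  let ⟨z, hC, hD⟩ := h
  ⟨z, hD, hC⟩

open Complex in
lemma exists_adj_incident : ∃ C D : Chord, CircleGraph.Adj C D ∧ Incident C D := by
  refine ⟨Chord.mk 1 I (by simp) (by simp) ?_, Chord.mk 1 (-I) (by simp) (by simp) ?_,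
    ⟨fun h => ?_, 1, left_mem_segment ℝ _ _, left_mem_segment ℝ _ _⟩, 1, by simp [Chord.mk],
    by simp [Chord.mk]⟩
  · simp [Complex.ext_iff]
  · simp [Complex.ext_iff]
  · have := congrArg Subtype.val h
    norm_num [Chord.mk, Complex.ext_iff] at this

open Complex in
lemma exists_adj_not_incident : ∃ C D : Chord, CircleGraph.Adj C D ∧ ¬Incident C D := by
  have h0 : ∀ z : ℂ, (0 : ℂ) ∈ segment ℝ z (-z) :=
    fun z => ⟨1 / 2, 1 / 2, by norm_num, by norm_num, by norm_num, by simp⟩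
  refine ⟨Chord.mk 1 (-1) (by simp) (by simp) ?_, Chord.mk I (-I) (by simp) (by simp) ?_,
    ⟨fun h => ?_, 0, h0 1, h0 I⟩, ?_⟩
  · norm_num [Complex.ext_iff]
  · norm_num [Complex.ext_iff]
  · have := congrArg Subtype.val h
    norm_num [Chord.mk, Complex.ext_iff] at this
  · rintro ⟨z, hC, hD⟩
    simp only [Chord.mk, Sym2.mem_iff] at hC hD
    rcases hC with rfl | rfl <;> norm_num [Complex.ext_iff] at hD

/-- The circle graph is not edge-transitive: no automorphism maps an
edge formed by two incident chords to an edge formed by two intersecting non-incident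
chords, and consequently there exist edges not related by any automorphism. -/
theorem circleGraph_not_edgeTransitive :
    (∀ (h : CircleGraph ≃g CircleGraph) (C D C' D' : Chord),
      CircleGraph.Adj C D → CircleGraph.Adj C' D' →
      Incident C D → ¬ Incident C' D' →
      ¬ ((h C = C' ∧ h D = D') ∨ (h C = D' ∧ h D = C'))) ∧
    ∃ C D C' D' : Chord, CircleGraph.Adj C D ∧ CircleGraph.Adj C' D' ∧
      ∀ h : CircleGraph ≃g CircleGraph,
        ¬ ((h C = C' ∧ h D = D') ∨ (h C = D' ∧ h D = C')) := by
  have key : ∀ (h : CircleGraph ≃g CircleGraph) (C D C' D' : Chord),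
      CircleGraph.Adj C D → CircleGraph.Adj C' D' → Incident C D → ¬Incident C' D' →
      ¬((h C = C' ∧ h D = D') ∨ (h C = D' ∧ h D = C')) := by
    rintro h C D C' D' hCD hCD' hinc hninc (⟨rfl, rfl⟩ | ⟨rfl, rfl⟩)
    · refine CircleGraph.not_hasFourSeparatedFarVertices_of_incident hCD hinc ?_
      simpa using (CircleGraph.hasFourSeparatedFarVertices_of_not_incident hCD' hninc).map h.symm
    · refine CircleGraph.not_hasFourSeparatedFarVertices_of_incident hCD.symm hinc.symm ?_
      simpa using (CircleGraph.hasFourSeparatedFarVertices_of_not_incident hCD' hninc).map h.symm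
  obtain ⟨C, D, hCD, hinc⟩ := exists_adj_incident
  obtain ⟨C', D', hCD', hninc⟩ := exists_adj_not_incident
  exact ⟨key, C, D, C', D', hCD, hCD', fun h => key h C D C' D' hCD hCD' hinc hninc⟩
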